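/- arXiv:2106.04958 — 2 statements merged into one kernel-verified Lean document; each statement's English description precedes it below -/
import Mathlib

section
/- Let f : ℝ → ℝ be convex with f(1) = 0, let P and Q be probability measures on a measurable space 𝒳, and let κ be a Markov kernel from 𝒳 to a measurable space 𝒴. If P_{X,Y} = P ⊗ κ and Q_{X,Y} = Q ⊗ κ are the corresponding composition-product measures on 𝒳 × 𝒴, then D_f(P_{X,Y} ‖ Q_{X,Y}) = D_f(P ‖ Q). -/
open MeasureTheory ProbabilityTheory

/-- The `f`-divergence `D_f(P‖Q) = ∫ f(dP/dQ) dQ` between two measures. -/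
noncomputable def fDiv {α : Type*} [MeasurableSpace α] (f : ℝ → ℝ)
    (P Q : Measure α) : ℝ :=
  ∫ x, f ((P.rnDeriv Q) x).toReal ∂Q

/-! Composing with the same kernel does not change the density: `d(P ⊗ κ)/d(Q ⊗ κ)(x, y) = dP/dQ(x)`
for `(Q ⊗ κ)`-a.e. `(x, y)` (`ProbabilityTheory.rnDeriv_measure_compProd_left`), and the first
marginal of `Q ⊗ κ` is `Q`, so both divergences are the same integral. -/

lemma integral_compProd_comp_fst {α β E : Type*} [MeasurableSpace α] [MeasurableSpace β]
    [NormedAddCommGroup E] [NormedSpace ℝ E]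
    (μ : Measure α) [SFinite μ] (κ : Kernel α β) [IsMarkovKernel κ]
    {g : α → E} (hg : AEStronglyMeasurable g μ) :
    ∫ p, g p.1 ∂(μ ⊗ₘ κ) = ∫ x, g x ∂μ := by
  rw [← Measure.fst_compProd μ κ] at hg
  calc ∫ p, g p.1 ∂(μ ⊗ₘ κ) = ∫ x, g x ∂(μ ⊗ₘ κ).fst :=
        (integral_map measurable_fst.aemeasurable hg).symm
    _ = ∫ x, g x ∂μ := by rw [Measure.fst_compProd]

theorem fDiv_compProd_right_general {𝒳 𝒴 : Type*} [MeasurableSpace 𝒳] [MeasurableSpace 𝒴]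
    (f : ℝ → ℝ) (hf : ConvexOn ℝ Set.univ f)
    (P Q : Measure 𝒳) [IsProbabilityMeasure P] [IsProbabilityMeasure Q]
    (κ : Kernel 𝒳 𝒴) [IsMarkovKernel κ] :
    fDiv f (P ⊗ₘ κ) (Q ⊗ₘ κ) = fDiv f P Q := by
  have hf_meas : Measurable f :=
    (continuousOn_univ.mp (hf.continuousOn isOpen_univ)).measurable
  calc fDiv f (P ⊗ₘ κ) (Q ⊗ₘ κ)
      = ∫ p, f (P.rnDeriv Q p.1).toReal ∂(Q ⊗ₘ κ) :=
        integral_congr_ae <|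
          (rnDeriv_measure_compProd_left P Q κ).fun_comp fun r ↦ f r.toReal
    _ = fDiv f P Q :=
        integral_compProd_comp_fst Q κ
          (hf_meas.comp (Measure.measurable_rnDeriv P Q).ennreal_toReal).aestronglyMeasurable

/-- For a convex `f` with `f 1 = 0`, probability measures `P`, `Q` on `𝒳` and a Markov kernel
`κ` from `𝒳` to `𝒴`, the `f`-divergence between the composition-product measures satisfies
`D_f(P ⊗ κ ‖ Q ⊗ κ) = D_f(P ‖ Q)`. -/
theorem fDiv_compProd_right {𝒳 𝒴 : Type*} [MeasurableSpace 𝒳] [MeasurableSpace 𝒴]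
    (f : ℝ → ℝ) (hf : ConvexOn ℝ Set.univ f) (hf1 : f 1 = 0)
    (P Q : Measure 𝒳) [IsProbabilityMeasure P] [IsProbabilityMeasure Q]
    (κ : Kernel 𝒳 𝒴) [IsMarkovKernel κ] :
    fDiv f (P ⊗ₘ κ) (Q ⊗ₘ κ) = fDiv f P Q :=
  fDiv_compProd_right_general f hf P Q κ
end

section
/- Let A be a real M×N matrix with M ≥ 1 such that A·Aᵀ is invertible (so the Moore–Penrose pseudoinverse of Aᵀ is (Aᵀ)† = (AAᵀ)⁻¹A), and let σ ≥ 0 satisfy ‖Aᵀ v‖ ≥ σ‖v‖ for all v ∈ ℝᴹ. Then for every a ∈ ℝᴺ and every β in the standard simplex Δ_M, one has ‖Aᵀβ − a‖² ≥ σ²·(1 − 𝟙ᵀ(AAᵀ)⁻¹A a)²/M + ‖(I − Aᵀ(AAᵀ)⁻¹A) a‖², where 𝟙 ∈ ℝᴹ is the all-ones vector. Consequently the response diversity min_{β∈Δ_M} ‖Aᵀβ − a‖² is bounded below by this quantity. -/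
/-!
Put `w := (AAᵀ)⁻¹A a`, so that `Aᵀw` is the orthogonal projection of `a` onto the row space of
`A`. Then `Aᵀβ − a = Aᵀ(β − w) + (Aᵀw − a)` is an orthogonal decomposition, the second summand
being `−(I − Aᵀ(AAᵀ)⁻¹A) a`. The first summand has squared norm at least `σ²‖β − w‖²`, and since
`∑ₖ (β − w)ₖ = 1 − 𝟙ᵀw`, Cauchy–Schwarz gives `‖β − w‖² ≥ (1 − 𝟙ᵀw)²/M`.
-/

open Matrix Finset

noncomputable def euclidEnorm {n : ℕ} (v : Fin n → ℝ) : ℝ :=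
  Real.sqrt (∑ i, v i ^ 2)

section EuclidEnorm

variable {n : ℕ}

lemma euclidEnorm_sq (v : Fin n → ℝ) : euclidEnorm v ^ 2 = v ⬝ᵥ v := by
  rw [euclidEnorm, Real.sq_sqrt (by positivity)]
  simp only [dotProduct, sq]

lemma euclidEnorm_neg (v : Fin n → ℝ) : euclidEnorm (-v) = euclidEnorm v := by
  simp only [euclidEnorm, Pi.neg_apply, neg_sq]

lemma euclidEnorm_add_sq_of_dotProduct_eq_zero {x y : Fin n → ℝ} (h : x ⬝ᵥ y = 0) :
    euclidEnorm (x + y) ^ 2 = euclidEnorm x ^ 2 + euclidEnorm y ^ 2 := by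
  rw [euclidEnorm_sq, euclidEnorm_sq, euclidEnorm_sq, add_dotProduct, dotProduct_add,
    dotProduct_add, dotProduct_comm y x, h]
  ring

lemma sq_sum_div_card_le_euclidEnorm_sq (v : Fin n → ℝ) :
    (∑ i, v i) ^ 2 / n ≤ euclidEnorm v ^ 2 := by
  refine div_le_of_le_mul₀ n.cast_nonneg (sq_nonneg _) ?_
  calc (∑ i, v i) ^ 2 ≤ #(univ : Finset (Fin n)) * ∑ i, v i ^ 2 := sq_sum_le_card_mul_sum_sq
    _ = euclidEnorm v ^ 2 * n := by
      rw [euclidEnorm, Real.sq_sqrt (by positivity), card_univ, Fintype.card_fin, mul_comm]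

end EuclidEnorm

section LeastSquares

variable {m n : Type*} [Fintype m] [DecidableEq m] [Fintype n]
  {A : Matrix m n ℝ}

lemma mulVec_transpose_mulVec_inv_mul_mulVec (hA : IsUnit (A * Aᵀ).det) (a : n → ℝ) :
    A *ᵥ (Aᵀ *ᵥ ((A * Aᵀ)⁻¹ * A) *ᵥ a) = A *ᵥ a := by
  rw [mulVec_mulVec, mulVec_mulVec, ← Matrix.mul_assoc, mul_nonsing_inv _ hA, Matrix.one_mul]

lemma transpose_mulVec_dotProduct_residual_eq_zero (hA : IsUnit (A * Aᵀ).det) (u : m → ℝ)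
    (a : n → ℝ) : (Aᵀ *ᵥ u) ⬝ᵥ (Aᵀ *ᵥ ((A * Aᵀ)⁻¹ * A) *ᵥ a - a) = 0 := by
  rw [mulVec_transpose, ← dotProduct_mulVec, mulVec_sub,
    mulVec_transpose_mulVec_inv_mul_mulVec hA, sub_self, dotProduct_zero]

end LeastSquares

lemma euclidEnorm_transpose_mulVec_sub_sq {M N : ℕ} {A : Matrix (Fin M) (Fin N) ℝ}
    (hA : IsUnit (A * Aᵀ).det) (u : Fin M → ℝ) (a : Fin N → ℝ) :
    euclidEnorm (Aᵀ *ᵥ u - a) ^ 2 =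
      euclidEnorm (Aᵀ *ᵥ (u - ((A * Aᵀ)⁻¹ * A) *ᵥ a)) ^ 2
        + euclidEnorm ((1 - Aᵀ * (A * Aᵀ)⁻¹ * A) *ᵥ a) ^ 2 := by
  set w := ((A * Aᵀ)⁻¹ * A) *ᵥ a
  have hdecomp : Aᵀ *ᵥ u - a = Aᵀ *ᵥ (u - w) + (Aᵀ *ᵥ w - a) := by
    rw [mulVec_sub]; abel
  have hresidual : (1 - Aᵀ * (A * Aᵀ)⁻¹ * A) *ᵥ a = -(Aᵀ *ᵥ w - a) := by
    rw [sub_mulVec, one_mulVec, Matrix.mul_assoc, ← mulVec_mulVec, neg_sub]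
  rw [hdecomp, euclidEnorm_add_sq_of_dotProduct_eq_zero
    (transpose_mulVec_dotProduct_residual_eq_zero hA _ a), hresidual, euclidEnorm_neg]

theorem divRew_lower_bound_general {M N : ℕ}
    (A : Matrix (Fin M) (Fin N) ℝ) (hA : IsUnit (A * Aᵀ).det)
    (σ : ℝ) (hσ : 0 ≤ σ)
    (hσA : ∀ v : Fin M → ℝ, σ * euclidEnorm v ≤ euclidEnorm (Aᵀ.mulVec v))
    (a : Fin N → ℝ) (β : Fin M → ℝ) (hβ : β ∈ stdSimplex ℝ (Fin M)) :
    σ ^ 2 * (1 - ∑ k, ((A * Aᵀ)⁻¹ * A).mulVec a k) ^ 2 / (M : ℝ)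
      + euclidEnorm ((1 - Aᵀ * (A * Aᵀ)⁻¹ * A).mulVec a) ^ 2
    ≤ euclidEnorm (Aᵀ.mulVec β - a) ^ 2 := by
  set v := β - ((A * Aᵀ)⁻¹ * A) *ᵥ a
  rw [euclidEnorm_transpose_mulVec_sub_sq hA β a]
  gcongr
  have hsum : ∑ k, v k = 1 - ∑ k, ((A * Aᵀ)⁻¹ * A).mulVec a k := by
    simp only [v, Pi.sub_apply, sum_sub_distrib, hβ.2]
  calc σ ^ 2 * (1 - ∑ k, ((A * Aᵀ)⁻¹ * A).mulVec a k) ^ 2 / M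
      = σ ^ 2 * ((∑ k, v k) ^ 2 / M) := by rw [hsum, mul_div_assoc]
    _ ≤ σ ^ 2 * euclidEnorm v ^ 2 := by gcongr; exact sq_sum_div_card_le_euclidEnorm_sq v
    _ = (σ * euclidEnorm v) ^ 2 := (mul_pow _ _ _).symm
    _ ≤ euclidEnorm (Aᵀ *ᵥ v) ^ 2 :=
      pow_le_pow_left₀ (mul_nonneg hσ (Real.sqrt_nonneg _)) (hσA v) 2

/-- Theorem 2 of the paper: for an empirical payoff matrix `A ∈ ℝ^{M×N}` with `M ≥ 1` and
`A * Aᵀ` invertible, a lower singular-value bound `σ` for `Aᵀ`, a payoff vector `a ∈ ℝᴺ`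
and any mixture `β` in the standard simplex,
`‖Aᵀβ − a‖² ≥ σ²(1 − 𝟙ᵀ(AAᵀ)⁻¹A a)²/M + ‖(I − Aᵀ(AAᵀ)⁻¹A) a‖²`.
Hence this quantity lower-bounds the response diversity `min_{β∈Δ_M} ‖Aᵀβ − a‖²`. -/
theorem divRew_lower_bound {M N : ℕ} (hM : 1 ≤ M)
    (A : Matrix (Fin M) (Fin N) ℝ) (hA : IsUnit (A * Aᵀ).det)
    (σ : ℝ) (hσ : 0 ≤ σ)
    (hσA : ∀ v : Fin M → ℝ, σ * euclidEnorm v ≤ euclidEnorm (Aᵀ.mulVec v))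
    (a : Fin N → ℝ) (β : Fin M → ℝ) (hβ : β ∈ stdSimplex ℝ (Fin M)) :
    σ ^ 2 * (1 - ∑ k, ((A * Aᵀ)⁻¹ * A).mulVec a k) ^ 2 / (M : ℝ)
      + euclidEnorm ((1 - Aᵀ * (A * Aᵀ)⁻¹ * A).mulVec a) ^ 2
    ≤ euclidEnorm (Aᵀ.mulVec β - a) ^ 2 :=
  divRew_lower_bound_general A hA σ hσ hσA a β hβ
end
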